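/- The symmetrized ARAP energy is not a perfect barrier against collapse: with f_ARAP(σ) = ∑ᵢ₌₁³ (σᵢ − 1)², define for s > 0 the symmetrized value along the path (1, s, s), namely g(s) = (1/2)·f_ARAP(1,s,s) + (1/2)·s²·f_ARAP(1, 1/s, 1/s). Then g(s) = 2·(1 − s)² for every s > 0, and hence g(s) tends to the finite limit 2 as s → 0⁺, even though the volume (1·s·s = s²) collapses to 0. -/

import Mathlib

open Filter Topology

/-- The ARAP distortion in singular values (3D). -/
def fARAP3 (a b c : ℝ) : ℝ := (a - 1)^2 + (b - 1)^2 + (c - 1)^2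

/-- The symmetrized ARAP value along the collapsing path `(1, s, s)`. -/
noncomputable def gPath (s : ℝ) : ℝ :=
  (1/2) * fARAP3 1 s s + (1/2) * s^2 * fARAP3 1 (1/s) (1/s)

lemma fARAP3_one_self_self (s : ℝ) : fARAP3 1 s s = 2 * (1 - s)^2 := by
  unfold fARAP3
  ring

/-- The volume factor `s²` exactly cancels the blow-up of the inverse term,
since `s * (1/s - 1) = 1 - s`. -/
lemma sq_mul_fARAP3_one_inv_inv {s : ℝ} (hs : s ≠ 0) :
    s^2 * fARAP3 1 (1/s) (1/s) = 2 * (1 - s)^2 := by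
  unfold fARAP3
  field_simp
  ring

lemma gPath_eq {s : ℝ} (hs : s ≠ 0) : gPath s = 2 * (1 - s)^2 := by
  rw [gPath, mul_assoc, sq_mul_fARAP3_one_inv_inv hs, fARAP3_one_self_self]
  ring

lemma tendsto_gPath_nhdsNE_zero : Tendsto gPath (𝓝[≠] 0) (𝓝 2) := by
  have hcont : Continuous fun s : ℝ => 2 * (1 - s)^2 := by fun_prop
  have hlim : Tendsto (fun s : ℝ => 2 * (1 - s)^2) (𝓝[≠] 0) (𝓝 2) :=
    (hcont.tendsto' 0 2 (by norm_num)).mono_left nhdsWithin_le_nhds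
  exact hlim.congr' (eventually_nhdsWithin_of_forall fun _ hs => (gPath_eq hs).symm)

/-- The symmetrized ARAP energy is not a perfect barrier:
along the path `(1, s, s)` one has `g(s) = 2(1 − s)²` for all `s > 0`, so `g`
tends to the finite limit `2` as `s → 0⁺`, although the volume collapses. -/
theorem statement_16 :
    (∀ s : ℝ, 0 < s → gPath s = 2 * (1 - s)^2) ∧
    Filter.Tendsto gPath (nhdsWithin 0 (Set.Ioi 0)) (nhds 2) :=
  ⟨fun _ hs => gPath_eq hs.ne',
    tendsto_gPath_nhdsNE_zero.mono_left (nhdsWithin_mono _ fun _ hs => ne_of_gt hs)⟩
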